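/- arXiv:1501.00292 — 6 statements merged into one kernel-verified Lean document; each statement's English description precedes it below -/
import Mathlib

section
/- Let A, B, C be affinely independent points of the Euclidean plane ℝ², let T be the convex hull of {A, B, C}, and let n be a vector such that ⟨A, n⟩ ≤ ⟨B, n⟩ ≤ ⟨C, n⟩. Then for every t ∈ ℝ, the length of the chord of T at level t relative to n is at most the length of the chord at level ⟨B, n⟩; that is, Metric.diam (T ∩ {x | ⟨x, n⟩ = t}) ≤ Metric.diam (T ∩ {x | ⟨x, n⟩ = ⟨B, n⟩}). (The longest chord of a triangle parallel to a given direction passes through a vertex, namely the vertex whose projection onto n lies between the projections of the other two.) -/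
open EuclideanSpace Metric

section Helpers

variable {E : Type*} [NormedAddCommGroup E] [InnerProductSpace ℝ E]

private lemma inner_linear (n : E) : IsLinearMap ℝ (fun x : E => (inner ℝ x n : ℝ)) :=
  ⟨fun x y => inner_add_left x y n, fun c x => real_inner_smul_left x n c⟩

private lemma hull_le_slice (A B C n : E)
    (hAB : (inner ℝ A n : ℝ) ≤ inner ℝ B n) (hAC : (inner ℝ A n : ℝ) ≤ inner ℝ C n) :
    convexHull ℝ {A, B, C} ⊆ {x | (inner ℝ A n : ℝ) ≤ inner ℝ x n} := by
  have hconv : Convex ℝ {x : E | ((inner ℝ A n : ℝ) : ℝ) ≤ ((inner ℝ x n : ℝ) : ℝ)} :=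
    convex_halfSpace_ge (β := ℝ) (inner_linear n) ((inner ℝ A n : ℝ))
  apply convexHull_min _ hconv
  rintro x (rfl | rfl | rfl)
  · exact le_refl ((inner ℝ x n : ℝ))
  · exact hAB
  · exact hAC

private lemma slice_subset (A B C n : E)
    (hBC : (inner ℝ B n : ℝ) ≤ inner ℝ C n)
    (hlt : (inner ℝ A n : ℝ) < inner ℝ B n)
    (t : ℝ) (ht1 : (inner ℝ A n : ℝ) ≤ t) (ht2 : t ≤ inner ℝ B n) :
    convexHull ℝ {A, B, C} ∩ {x | (inner ℝ x n : ℝ) = t} ⊆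
      (fun y => A + ((t - (inner ℝ A n : ℝ)) / ((inner ℝ B n : ℝ) - (inner ℝ A n : ℝ))) • (y - A)) ''
        (convexHull ℝ {A, B, C} ∩ {x | (inner ℝ x n : ℝ) = inner ℝ B n}) := by
  have hd : (0:ℝ) < (inner ℝ B n : ℝ) - inner ℝ A n := by linarith
  set fA : ℝ := inner ℝ A n with hfA
  set fB : ℝ := inner ℝ B n with hfB
  set lam : ℝ := (t - fA) / (fB - fA) with hlam
  rintro x ⟨hx, hfx⟩
  simp only [Set.mem_setOf_eq] at hfx
  rw [show ({A, B, C} : Set E) = insert A {B, C} from rfl,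
      convexHull_insert (Set.insert_nonempty _ _), convexHull_pair, mem_convexJoin] at hx
  obtain ⟨A', hA', z, hz, hxz⟩ := hx
  rw [Set.mem_singleton_iff] at hA'
  rw [hA'] at hxz
  obtain ⟨a, u, ha, hu, hau, hx_eq⟩ := hxz
  obtain ⟨p, q, hp, hq, hpq, hz_eq⟩ := hz
  have hzhull : z ∈ convexHull ℝ ({A, B, C} : Set E) :=
    (convex_convexHull ℝ _).segment_subset
      (subset_convexHull ℝ _ (by simp)) (subset_convexHull ℝ _ (by simp))
      ⟨p, q, hp, hq, hpq, hz_eq⟩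
  have hAhull : A ∈ convexHull ℝ ({A, B, C} : Set E) := subset_convexHull ℝ _ (by simp)
  set fz : ℝ := inner ℝ z n with hfz
  have hfzval : fz = p * fB + q * (inner ℝ C n : ℝ) := by
    rw [hfz, ← hz_eq, inner_add_left, real_inner_smul_left, real_inner_smul_left, hfB]
  have hfzB : fB ≤ fz := by
    have hp1 : p = 1 - q := by linarith
    have hd2 : fz - fB = q * ((inner ℝ C n : ℝ) - fB) := by rw [hfzval, hp1]; ring
    nlinarith [mul_nonneg hq (sub_nonneg.2 hBC)]
  have hfxval : a * fA + u * fz = t := by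
    rw [← hfx, ← hx_eq, inner_add_left, real_inner_smul_left, real_inner_smul_left]
  have ha' : a = 1 - u := by linarith
  rcases eq_or_lt_of_le hu with h0 | hupos
  · -- u = 0 : x = A, t = fA, lam = 0
    have hu0 : u = 0 := h0.symm
    subst hu0
    have ha1 : a = 1 := by linarith
    have hxA : x = A := by rw [← hx_eq, ha1]; module
    have htfA : t = fA := by rw [ha1] at hfxval; linarith
    have hlam0 : lam = 0 := by rw [hlam, htfA]; simp
    refine ⟨B, ⟨subset_convexHull ℝ _ (by simp), rfl⟩, ?_⟩
    simp [hlam0, hxA]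
  · -- u > 0
    have hkey : u * (fz - fA) = t - fA := by rw [← hfxval, ha']; ring
    have hlam_eq : lam * (fB - fA) = u * (fz - fA) := by
      rw [hlam, div_mul_cancel₀ _ hd.ne', hkey]
    have hul : u ≤ lam := by nlinarith
    have hlam_pos : 0 < lam := by nlinarith
    set w : ℝ := u / lam with hw
    have hw0 : 0 ≤ w := div_nonneg hu hlam_pos.le
    have hw1 : w ≤ 1 := (div_le_one hlam_pos).2 hul
    refine ⟨(1 - w) • A + w • z, ⟨?_, ?_⟩, ?_⟩
    · exact (convex_convexHull ℝ _) hAhull hzhull (by linarith) hw0 (by ring)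
    · show (inner ℝ ((1 - w) • A + w • z) n : ℝ) = fB
      rw [inner_add_left, real_inner_smul_left, real_inner_smul_left, ← hfA, ← hfz]
      have hwzA : w * (fz - fA) = fB - fA := by
        rw [hw]
        field_simp
        linarith [hlam_eq]
      nlinarith [hwzA]
    · show A + lam • ((1 - w) • A + w • z - A) = x
      have h1 : (1 - w) • A + w • z - A = w • (z - A) := by module
      have h2 : lam * w = u := by rw [hw]; field_simp
      rw [h1, smul_smul, h2, ← hx_eq, ha']
      module

private lemma diam_le_aux (A : E) (r : ℝ) (hr0 : 0 ≤ r) (hr1 : r ≤ 1)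
    (S T : Set E) (hT : Bornology.IsBounded T)
    (h : S ⊆ (fun y => A + r • (y - A)) '' T) :
    Metric.diam S ≤ Metric.diam T := by
  have hlip : LipschitzWith 1 (fun y : E => A + r • (y - A)) := by
    apply LipschitzWith.of_dist_le_mul
    intro x y
    simp only [dist_eq_norm, NNReal.coe_one, one_mul]
    have he : (A + r • (x - A)) - (A + r • (y - A)) = r • (x - y) := by module
    rw [he, norm_smul, Real.norm_eq_abs, abs_of_nonneg hr0]
    exact mul_le_of_le_one_left (norm_nonneg _) hr1
  have h1 : EMetric.diam S ≤ EMetric.diam T := by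
    calc EMetric.diam S ≤ EMetric.diam ((fun y : E => A + r • (y - A)) '' T) :=
          EMetric.diam_mono h
      _ ≤ 1 * EMetric.diam T := hlip.ediam_image_le T
      _ = EMetric.diam T := one_mul _
  exact ENNReal.toReal_mono hT.ediam_ne_top h1

end Helpers

theorem longest_chord_through_middle_vertex
    (A B C n : EuclideanSpace ℝ (Fin 2))
    (hABC : AffineIndependent ℝ ![A, B, C])
    (hAB : (inner ℝ A n : ℝ) ≤ inner ℝ B n)
    (hBC : (inner ℝ B n : ℝ) ≤ inner ℝ C n) :
    ∀ t : ℝ,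
      Metric.diam ((convexHull ℝ {A, B, C}) ∩ {x | (inner ℝ x n : ℝ) = t}) ≤
        Metric.diam ((convexHull ℝ {A, B, C}) ∩ {x | (inner ℝ x n : ℝ) = inner ℝ B n}) := by
  intro t
  have hAC : (inner ℝ A n : ℝ) ≤ inner ℝ C n := le_trans hAB hBC
  have hset : ({C, B, A} : Set (EuclideanSpace ℝ (Fin 2))) = {A, B, C} := by
    ext x; simp; tauto
  have hbound : Bornology.IsBounded
      ((convexHull ℝ ({A, B, C} : Set (EuclideanSpace ℝ (Fin 2)))) ∩
        {x | (inner ℝ x n : ℝ) = inner ℝ B n}) :=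
    (((Set.finite_singleton C).insert B).insert A).isCompact_convexHull ℝ |>.isBounded.subset
      Set.inter_subset_left
  by_cases h1 : t < inner ℝ A n
  · have hempty : (convexHull ℝ ({A, B, C} : Set (EuclideanSpace ℝ (Fin 2)))) ∩
        {x | (inner ℝ x n : ℝ) = t} = ∅ := by
      ext x
      simp only [Set.mem_inter_iff, Set.mem_setOf_eq, Set.mem_empty_iff_false, iff_false, not_and]
      intro hx hfx
      have := hull_le_slice A B C n hAB hAC hx
      simp only [Set.mem_setOf_eq] at this
      linarith
    rw [hempty]
    simpa using Metric.diam_nonneg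
  · by_cases h2 : (inner ℝ C n : ℝ) < t
    · have hCle : convexHull ℝ ({A, B, C} : Set (EuclideanSpace ℝ (Fin 2))) ⊆
          {x | (inner ℝ C (-n) : ℝ) ≤ inner ℝ x (-n)} := by
        rw [← hset]
        exact hull_le_slice C B A (-n)
          (by simp only [inner_neg_right]; linarith)
          (by simp only [inner_neg_right]; linarith)
      have hempty : (convexHull ℝ ({A, B, C} : Set (EuclideanSpace ℝ (Fin 2)))) ∩
          {x | (inner ℝ x n : ℝ) = t} = ∅ := by
        ext x
        simp only [Set.mem_inter_iff, Set.mem_setOf_eq, Set.mem_empty_iff_false, iff_false,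
          not_and]
        intro hx hfx
        have := hCle hx
        simp only [Set.mem_setOf_eq, inner_neg_right] at this
        linarith
      rw [hempty]
      simpa using Metric.diam_nonneg
    · push_neg at h1 h2
      by_cases h3 : t ≤ (inner ℝ B n : ℝ)
      · rcases eq_or_lt_of_le hAB with hEq | hlt
        · have ht : t = inner ℝ B n := le_antisymm h3 (by linarith)
          rw [ht]
        · exact diam_le_aux A ((t - inner ℝ A n) / ((inner ℝ B n : ℝ) - inner ℝ A n))
            (div_nonneg (by linarith) (by linarith))
            ((div_le_one (by linarith)).2 (by linarith))
            _ _ hbound (slice_subset A B C n hBC hlt t h1 h3)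
      · push_neg at h3
        have hlt : (inner ℝ B n : ℝ) < inner ℝ C n := lt_of_lt_of_le h3 h2
        have hsub := slice_subset C B A (-n)
          (by simp only [inner_neg_right]; linarith)
          (by simp only [inner_neg_right]; linarith)
          (-t) (by simp only [inner_neg_right]; linarith)
          (by simp only [inner_neg_right]; linarith)
        rw [hset] at hsub
        simp only [inner_neg_right, neg_inj] at hsub
        exact diam_le_aux C _
          (div_nonneg (by linarith) (by linarith))
          ((div_le_one (by linarith)).2 (by linarith))
          _ _ hbound hsub
end

section
/- Let A, B, C be affinely independent points of the Euclidean plane ℝ², let T be the convex hull of {A, B, C}, and let n be a vector such that ⟨A, n⟩ < ⟨B, n⟩ ≤ ⟨C, n⟩. Then for every t with ⟨A, n⟩ ≤ t ≤ ⟨B, n⟩ one has Metric.diam (T ∩ {x | ⟨x, n⟩ = t}) = ((t − ⟨A, n⟩) / (⟨B, n⟩ − ⟨A, n⟩)) · Metric.diam (T ∩ {x | ⟨x, n⟩ = ⟨B, n⟩}). (The length of the chords of a triangle parallel to a given direction varies linearly with the level, from zero at the level of the first vertex to its maximum at the level of the middle vertex.) -/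
open Set Pointwise

theorem chord_length_linear_in_level
    (A B C n : EuclideanSpace ℝ (Fin 2))
    (hABC : AffineIndependent ℝ ![A, B, C])
    (hAB : (inner ℝ A n : ℝ) < inner ℝ B n)
    (hBC : (inner ℝ B n : ℝ) ≤ inner ℝ C n) :
    ∀ t : ℝ, (inner ℝ A n : ℝ) ≤ t → t ≤ (inner ℝ B n : ℝ) →
      Metric.diam ((convexHull ℝ {A, B, C}) ∩ {x | (inner ℝ x n : ℝ) = t}) =
        ((t - (inner ℝ A n : ℝ)) / ((inner ℝ B n : ℝ) - (inner ℝ A n : ℝ))) *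
          Metric.diam ((convexHull ℝ {A, B, C}) ∩ {x | (inner ℝ x n : ℝ) = inner ℝ B n}) := by
  intro t hta htb
  have key : ∀ (w : EuclideanSpace ℝ (Fin 2)) (r : ℝ),
      (inner ℝ (A + r • (w - A)) n : ℝ) = inner ℝ A n + r * ((inner ℝ w n : ℝ) - inner ℝ A n) := by
    intro w r
    rw [inner_add_left, real_inner_smul_left, inner_sub_left]
  set a : ℝ := inner ℝ A n with ha
  set b : ℝ := inner ℝ B n with hb
  set c : ℝ := inner ℝ C n with hc
  set s : ℝ := (t - a) / (b - a) with hs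
  set T : Set (EuclideanSpace ℝ (Fin 2)) := convexHull ℝ {A, B, C} with hT
  have hba : (0:ℝ) < b - a := by linarith
  have hs0 : 0 ≤ s := div_nonneg (by linarith) hba.le
  have hs1 : s ≤ 1 := by rw [hs, div_le_one hba]; linarith
  have hst : s * (b - a) = t - a := div_mul_cancel₀ _ hba.ne'
  clear_value a b c s
  have hAmem : A ∈ T := subset_convexHull ℝ _ (by simp)
  have hmain : T ∩ {x | (inner ℝ x n : ℝ) = t}
      = (fun x => A + s • (x - A)) '' (T ∩ {x | (inner ℝ x n : ℝ) = b}) := by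
    apply Set.Subset.antisymm
    · rintro y ⟨hyT, hyt⟩
      have hyt'' : (inner ℝ y n : ℝ) = t := hyt
      have h1 : y ∈ convexJoin ℝ {A} (convexHull ℝ {B, C}) := by
        rw [← convexHull_insert (Set.insert_nonempty _ _)]; exact hyT
      rw [convexHull_pair, mem_convexJoin] at h1
      obtain ⟨p, hp, z, hz, hyz⟩ := h1
      rw [Set.mem_singleton_iff] at hp
      rw [hp] at hyz
      rw [segment_eq_image' ℝ] at hyz
      obtain ⟨u, ⟨hu0, hu1⟩, hy⟩ := hyz
      have hy' : A + u • (z - A) = y := hy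
      have hzT : z ∈ T := by
        have hseg : segment ℝ B C ⊆ T :=
          (convex_convexHull ℝ _).segment_subset
            (subset_convexHull ℝ _ (by simp)) (subset_convexHull ℝ _ (by simp))
        exact hseg hz
      have hfz : b ≤ (inner ℝ z n : ℝ) := by
        obtain ⟨v, ⟨hv0, hv1⟩, hzv⟩ := (segment_eq_image ℝ B C) ▸ hz
        have hzv' : (1 - v) • B + v • C = z := hzv
        have hinz : (inner ℝ z n : ℝ) = (1 - v) * inner ℝ B n + v * inner ℝ C n := by
          rw [← hzv', inner_add_left, real_inner_smul_left, real_inner_smul_left]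
        rw [hinz, ← hb, ← hc]
        nlinarith [mul_nonneg hv0 (sub_nonneg.2 hBC)]
      have hyt' : t = a + u * ((inner ℝ z n : ℝ) - a) := by
        rw [← hyt'', ← hy', key]
      have hfza : (0:ℝ) < (inner ℝ z n : ℝ) - a := by linarith
      rcases eq_or_lt_of_le hta with hta' | hta'
      · -- t = a, so u = 0, y = A, s = 0
        have hu : u = 0 := by
          rcases eq_or_lt_of_le hu0 with h | h
          · exact h.symm
          · nlinarith [mul_pos h hfza]
        have hyA : y = A := by rw [← hy', hu]; simp
        have hsz : s = 0 := by
          rw [hs, ← hta', sub_self, zero_div]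
        refine ⟨B, ⟨subset_convexHull ℝ _ (by simp), hb.symm⟩, ?_⟩
        show A + s • (B - A) = y
        rw [hsz, hyA]; simp
      · -- t > a, so s > 0
        have hspos : 0 < s := by rw [hs]; exact div_pos (by linarith) hba
        have hus : u ≤ s := by
          nlinarith [mul_nonneg hu0 (sub_nonneg.2 hfz)]
        refine ⟨A + (u / s) • (z - A), ⟨?_, ?_⟩, ?_⟩
        · have hxcomb : A + (u / s) • (z - A) = (1 - u / s) • A + (u / s) • z := by
            rw [smul_sub, sub_smul, one_smul]; abel
          rw [hxcomb]
          exact (convex_convexHull ℝ _) hAmem hzT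
            (by rw [sub_nonneg, div_le_one hspos]; exact hus)
            (div_nonneg hu0 hs0) (by ring)
        · show (inner ℝ (A + (u / s) • (z - A)) n : ℝ) = b
          rw [key]
          have h3 : u * ((inner ℝ z n : ℝ) - a) = s * (b - a) := by
            rw [hst]; linarith
          have h2 : u / s * ((inner ℝ z n : ℝ) - a) = b - a := by
            rw [div_mul_eq_mul_div, h3, mul_comm, mul_div_assoc, div_self hspos.ne', mul_one]
          linarith
        · show A + s • (A + (u / s) • (z - A) - A) = y
          rw [add_sub_cancel_left, smul_smul, mul_div_cancel₀ _ hspos.ne']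
          exact hy'
    · rintro y ⟨x, ⟨hxT, hxb⟩, rfl⟩
      have hxb' : (inner ℝ x n : ℝ) = b := hxb
      constructor
      · show A + s • (x - A) ∈ T
        have hxcomb : A + s • (x - A) = (1 - s) • A + s • x := by
          rw [smul_sub, sub_smul, one_smul]; abel
        rw [hxcomb]
        exact (convex_convexHull ℝ _) hAmem hxT (by linarith) hs0 (by ring)
      · show (inner ℝ (A + s • (x - A)) n : ℝ) = t
        rw [key, hxb']
        linarith
  rw [hmain]
  have himg : (fun x => A + s • (x - A)) '' (T ∩ {x | (inner ℝ x n : ℝ) = b})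
      = (A - s • A) +ᵥ (s • (T ∩ {x | (inner ℝ x n : ℝ) = b})) := by
    rw [← Set.image_smul, ← Set.image_vadd, Set.image_image]
    apply Set.image_congr'
    intro x
    show A + s • (x - A) = (A - s • A) + s • x
    rw [smul_sub]; abel
  rw [himg, diam_vadd, diam_smul₀, Real.norm_of_nonneg hs0]
end

section
/- Let O, A, A', B, B' be points of ℝ² with A ∈ segment ℝ O A' and B ∈ segment ℝ O B'. Let L be an affine line of ℝ² (an affine subspace whose direction has dimension 1) such that none of the five points O, A, A', B, B' lies on L. For segments S, T define m(S, T) ∈ ℤ to be 1 if L meets both S and T (i.e. (↑L ∩ S).Nonempty and (↑L ∩ T).Nonempty) and 0 otherwise. Then m(segment ℝ A A', segment ℝ B B') = m(segment ℝ O A', segment ℝ O B') − m(segment ℝ O A, segment ℝ O B') − m(segment ℝ O A', segment ℝ O B) + m(segment ℝ O A, segment ℝ O B). (This inclusion–exclusion identity for lines crossing pairs of concurrent segments is the core of the decomposition ρ(A,A',B,B') = ρ(OA',OB') − ρ(OA,OB') − ρ(OA',OB) + ρ(OA,OB) of Proposition 4.1.) -/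
open Classical

/-- Arithmetic core: if `x` is a convex combination of nonzero reals `a, a'` and `x ≠ 0`,
then the sign-change indicators satisfy an additive relation. -/
private lemma ind_split {a x a' u v : ℝ} (ha : a ≠ 0) (hx : x ≠ 0) (ha' : a' ≠ 0)
    (hu : 0 ≤ u) (hv : 0 ≤ v) (huv : u + v = 1) (hcomb : x = u * a + v * a') :
    (if a * a' < 0 then (1 : ℤ) else 0) =
      (if a * x < 0 then (1 : ℤ) else 0) + (if x * a' < 0 then (1 : ℤ) else 0) := by
  have key : x * x = u * (a * x) + v * (x * a') := by rw [hcomb]; ring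
  have hx2 : 0 < x * x := mul_self_pos.mpr hx
  by_cases h2 : a * x < 0 <;> by_cases h3 : x * a' < 0
  · exfalso; nlinarith
  · have hxa' : 0 < x * a' :=
      lt_of_le_of_ne (not_lt.1 h3) (Ne.symm (mul_ne_zero hx ha'))
    have h1 : a * a' < 0 := by nlinarith
    simp [h1, h2, h3]
  · have hax : 0 < a * x :=
      lt_of_le_of_ne (not_lt.1 h2) (Ne.symm (mul_ne_zero ha hx))
    have h1 : a * a' < 0 := by nlinarith
    simp [h1, h2, h3]
  · have hax : 0 < a * x :=
      lt_of_le_of_ne (not_lt.1 h2) (Ne.symm (mul_ne_zero ha hx))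
    have hxa' : 0 < x * a' :=
      lt_of_le_of_ne (not_lt.1 h3) (Ne.symm (mul_ne_zero hx ha'))
    have h1 : ¬ a * a' < 0 := by nlinarith
    simp [h1, h2, h3]

private lemma cross_iff {L : AffineSubspace ℝ (EuclideanSpace ℝ (Fin 2))}
    (f : EuclideanSpace ℝ (Fin 2) → ℝ)
    (hf : ∀ x, x ∈ L ↔ f x = 0)
    (haff : ∀ (u v : ℝ) (P Q : EuclideanSpace ℝ (Fin 2)), u + v = 1 →
      f (u • P + v • Q) = u * f P + v * f Q)
    {P Q : EuclideanSpace ℝ (Fin 2)} (hP : P ∉ L) (hQ : Q ∉ L) :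
    ((L : Set (EuclideanSpace ℝ (Fin 2))) ∩ segment ℝ P Q).Nonempty ↔ f P * f Q < 0 := by
  have hfP : f P ≠ 0 := fun h => hP ((hf P).2 h)
  have hfQ : f Q ≠ 0 := fun h => hQ ((hf Q).2 h)
  constructor
  · rintro ⟨z, hzL, u, v, hu, hv, huv, rfl⟩
    have hz : u * f P + v * f Q = 0 := by
      have := (hf _).1 hzL
      rwa [haff u v P Q huv] at this
    rcases lt_or_gt_of_ne hfP with h1 | h1 <;> rcases lt_or_gt_of_ne hfQ with h2 | h2
    · exfalso
      have h4 : u * f P ≤ 0 := mul_nonpos_iff.2 (Or.inl ⟨hu, h1.le⟩)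
      have h5 : v * f Q ≤ 0 := mul_nonpos_iff.2 (Or.inl ⟨hv, h2.le⟩)
      have h6 : u * f P = 0 := by linarith
      have h7 : v * f Q = 0 := by linarith
      rcases mul_eq_zero.1 h6 with h | h
      · rcases mul_eq_zero.1 h7 with h' | h'
        · linarith
        · exact hfQ h'
      · exact hfP h
    · exact mul_neg_of_neg_of_pos h1 h2
    · exact mul_neg_of_pos_of_neg h1 h2
    · exfalso
      have h4 : 0 ≤ u * f P := mul_nonneg hu h1.le
      have h5 : 0 ≤ v * f Q := mul_nonneg hv h2.le
      have h6 : u * f P = 0 := by linarith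
      have h7 : v * f Q = 0 := by linarith
      rcases mul_eq_zero.1 h6 with h | h
      · rcases mul_eq_zero.1 h7 with h' | h'
        · linarith
        · exact hfQ h'
      · exact hfP h
  · intro hlt
    have hd : f P - f Q ≠ 0 := by
      intro h
      have h' : f P = f Q := by linarith
      rw [h'] at hlt
      nlinarith [mul_self_nonneg (f Q)]
    set t : ℝ := f P / (f P - f Q) with ht
    have h1t : 1 - t = (-f Q) / (f P - f Q) := by
      rw [ht]; field_simp; ring
    have ht0 : 0 ≤ t := by
      rcases lt_or_gt_of_ne hfP with h1 | h1
      · have h2 : 0 < f Q := by nlinarith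
        exact le_of_lt (div_pos_of_neg_of_neg h1 (by linarith))
      · have h2 : f Q < 0 := by nlinarith
        have : 0 < f P - f Q := by linarith
        positivity
    have ht1 : t ≤ 1 := by
      rcases lt_or_gt_of_ne hfP with h1 | h1
      · have h2 : 0 < f Q := by nlinarith
        have hpos : 0 < 1 - t := by
          rw [h1t]; exact div_pos_of_neg_of_neg (by linarith) (by linarith)
        linarith
      · have h2 : f Q < 0 := by nlinarith
        have hpos : 0 < 1 - t := by
          rw [h1t]; exact div_pos (by linarith) (by linarith)
        linarith
    refine ⟨(1 - t) • P + t • Q, ?_, 1 - t, t, by linarith, ht0, by ring, rfl⟩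
    rw [SetLike.mem_coe, hf, haff _ _ _ _ (by ring), ht]
    field_simp
    ring

open Classical in
theorem inclusion_exclusion_chords_concurrent_segments
    (O A A' B B' : EuclideanSpace ℝ (Fin 2))
    (hA : A ∈ segment ℝ O A') (hB : B ∈ segment ℝ O B')
    (L : AffineSubspace ℝ (EuclideanSpace ℝ (Fin 2)))
    (hL : Module.finrank ℝ L.direction = 1)
    (hO : O ∉ L) (hA' : A' ∉ L) (hAL : A ∉ L) (hB' : B' ∉ L) (hBL : B ∉ L)
    (m : Set (EuclideanSpace ℝ (Fin 2)) → Set (EuclideanSpace ℝ (Fin 2)) → ℤ)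
    (hm : ∀ S T, m S T =
      if ((L : Set (EuclideanSpace ℝ (Fin 2))) ∩ S).Nonempty ∧
          ((L : Set (EuclideanSpace ℝ (Fin 2))) ∩ T).Nonempty then 1 else 0) :
    m (segment ℝ A A') (segment ℝ B B') =
      m (segment ℝ O A') (segment ℝ O B') - m (segment ℝ O A) (segment ℝ O B')
        - m (segment ℝ O A') (segment ℝ O B) + m (segment ℝ O A) (segment ℝ O B) := by
  classical
  -- a point on L
  have hLne : (L : Set (EuclideanSpace ℝ (Fin 2))).Nonempty := by
    rw [AffineSubspace.nonempty_iff_ne_bot]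
    intro h
    rw [h, AffineSubspace.direction_bot] at hL
    simp at hL
  obtain ⟨p₀, hp₀⟩ := hLne
  -- a normal vector
  have hdim : Module.finrank ℝ (EuclideanSpace ℝ (Fin 2)) = 2 := finrank_euclideanSpace_fin
  have horth : Module.finrank ℝ L.directionᗮ = 1 := by
    have h := Submodule.finrank_add_finrank_orthogonal L.direction
    omega
  obtain ⟨n, hn, hn0⟩ := Submodule.exists_mem_ne_zero_of_ne_bot
    (p := L.directionᗮ) (by intro h; rw [h] at horth; simp at horth)
  have hKle : L.direction ≤ (ℝ ∙ n)ᗮ := by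
    intro v hv
    rw [Submodule.mem_orthogonal_singleton_iff_inner_right]
    have h := (Submodule.mem_orthogonal _ n).1 hn v hv
    rwa [real_inner_comm] at h
  have hfr : Module.finrank ℝ (ℝ ∙ n)ᗮ = 1 := by
    have h1 : Module.finrank ℝ (ℝ ∙ n) = 1 := finrank_span_singleton hn0
    have h := Submodule.finrank_add_finrank_orthogonal (ℝ ∙ n)
    omega
  have hKeq : L.direction = (ℝ ∙ n)ᗮ :=
    Submodule.eq_of_le_of_finrank_le hKle (by rw [hfr, hL])
  set f : EuclideanSpace ℝ (Fin 2) → ℝ :=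
    fun x => (inner ℝ n x : ℝ) - (inner ℝ n p₀ : ℝ) with hfdef
  have hmem : ∀ x, x ∈ L ↔ f x = 0 := by
    intro x
    rw [← AffineSubspace.vsub_right_mem_direction_iff_mem hp₀ x, hKeq,
      Submodule.mem_orthogonal_singleton_iff_inner_right]
    simp [hfdef, vsub_eq_sub, inner_sub_right, sub_eq_zero]
  have haff : ∀ (u v : ℝ) (P Q : EuclideanSpace ℝ (Fin 2)), u + v = 1 →
      f (u • P + v • Q) = u * f P + v * f Q := by
    intro u v P Q huv
    simp only [hfdef, inner_add_right, real_inner_smul_right]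
    linear_combination (inner ℝ n p₀ : ℝ) * huv
  have hfO : f O ≠ 0 := fun h => hO ((hmem O).2 h)
  have hfA : f A ≠ 0 := fun h => hAL ((hmem A).2 h)
  have hfA' : f A' ≠ 0 := fun h => hA' ((hmem A').2 h)
  have hfB : f B ≠ 0 := fun h => hBL ((hmem B).2 h)
  have hfB' : f B' ≠ 0 := fun h => hB' ((hmem B').2 h)
  obtain ⟨u, v, hu, hv, huv, hAeq⟩ := hA
  obtain ⟨u', v', hu', hv', huv', hBeq⟩ := hB
  have hfAc : f A = u * f O + v * f A' := by
    rw [← hAeq]; exact haff u v O A' huv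
  have hfBc : f B = u' * f O + v' * f B' := by
    rw [← hBeq]; exact haff u' v' O B' huv'
  have IA := ind_split hfO hfA hfA' hu hv huv hfAc
  have IB := ind_split hfO hfB hfB' hu' hv' huv' hfBc
  have c1 := cross_iff f hmem haff hAL hA'
  have c2 := cross_iff f hmem haff hO hA'
  have c3 := cross_iff f hmem haff hO hAL
  have c4 := cross_iff f hmem haff hO hB'
  have c5 := cross_iff f hmem haff hO hBL
  have c6 := cross_iff f hmem haff hBL hB'
  have split_and : ∀ (p q : Prop),
      (if p ∧ q then (1 : ℤ) else 0) = (if p then 1 else 0) * (if q then 1 else 0) := by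
    intro p q
    by_cases hp : p <;> by_cases hq : q <;> simp [hp, hq]
  simp only [hm, c1, c2, c3, c4, c5, c6, split_and]
  rw [IA, IB]
  ring
end

section
/- Let γ ∈ (0, π), let ℓ > 0, and let x satisfy 0 < x and x·sin γ < ℓ. Write R(t) = Real.sqrt (ℓ² − t²·(sin γ)²). Then the function P₊(t) = t²·(sin γ)² / (2ℓ²) − cos γ · t · R(t) / (2ℓ²) − (cos γ / (2·sin γ)) · Real.arctan (R(t) / (t·sin γ)) has derivative (x·sin γ / (ℓ·R(x))) · Real.sin (Real.arcsin (x·sin γ / ℓ) + γ) at the point x. (This gives an explicit antiderivative, on the interval 0 < t·sin γ < ℓ, of the integrand with the plus sign appearing in the multi-chord density of concave polygons.) -/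
theorem antiderivative_plus_integrand
    (γ ℓ x : ℝ) (hγ : γ ∈ Set.Ioo 0 Real.pi) (hℓ : 0 < ℓ)
    (hx : 0 < x) (hxl : x * Real.sin γ < ℓ) :
    HasDerivAt
      (fun t : ℝ =>
        t ^ 2 * (Real.sin γ) ^ 2 / (2 * ℓ ^ 2)
          - Real.cos γ * t * Real.sqrt (ℓ ^ 2 - t ^ 2 * (Real.sin γ) ^ 2) / (2 * ℓ ^ 2)
          - (Real.cos γ / (2 * Real.sin γ)) *
              Real.arctan (Real.sqrt (ℓ ^ 2 - t ^ 2 * (Real.sin γ) ^ 2) / (t * Real.sin γ)))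
      ((x * Real.sin γ / (ℓ * Real.sqrt (ℓ ^ 2 - x ^ 2 * (Real.sin γ) ^ 2))) *
        Real.sin (Real.arcsin (x * Real.sin γ / ℓ) + γ)) x := by
  obtain ⟨hγ0, hγπ⟩ := hγ
  have hs : 0 < Real.sin γ := Real.sin_pos_of_pos_of_lt_pi hγ0 hγπ
  set s := Real.sin γ with hsdef
  set c := Real.cos γ with hcdef
  have hxs : 0 < x * s := mul_pos hx hs
  have hD : 0 < ℓ ^ 2 - x ^ 2 * s ^ 2 := by nlinarith
  have hR : 0 < Real.sqrt (ℓ ^ 2 - x ^ 2 * s ^ 2) := Real.sqrt_pos.mpr hD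
  set R := Real.sqrt (ℓ ^ 2 - x ^ 2 * s ^ 2) with hRdef
  have hR2 : R ^ 2 = ℓ ^ 2 - x ^ 2 * s ^ 2 := Real.sq_sqrt hD.le
  -- derivative of inner function ℓ² - t²s²
  have hinner : HasDerivAt (fun t : ℝ => ℓ ^ 2 - t ^ 2 * s ^ 2)
      (-((2 : ℕ) * x ^ 1 * s ^ 2)) x := by
    have h1 : HasDerivAt (fun t : ℝ => t ^ 2 * s ^ 2) ((2 : ℕ) * x ^ 1 * s ^ 2) x :=
      (hasDerivAt_pow 2 x).mul_const (s ^ 2)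
    simpa using h1.const_sub (ℓ ^ 2)
  have hsqrt : HasDerivAt (fun t : ℝ => Real.sqrt (ℓ ^ 2 - t ^ 2 * s ^ 2))
      ((-((2 : ℕ) * x ^ 1 * s ^ 2)) / (2 * R)) x := hinner.sqrt hD.ne'
  -- first term
  have h1 : HasDerivAt (fun t : ℝ => t ^ 2 * s ^ 2 / (2 * ℓ ^ 2))
      (((2 : ℕ) * x ^ 1 * s ^ 2) / (2 * ℓ ^ 2)) x :=
    ((hasDerivAt_pow 2 x).mul_const (s ^ 2)).div_const (2 * ℓ ^ 2)
  -- second term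
  have h2 : HasDerivAt (fun t : ℝ => c * t * Real.sqrt (ℓ ^ 2 - t ^ 2 * s ^ 2) / (2 * ℓ ^ 2))
      ((c * R + c * x * ((-((2 : ℕ) * x ^ 1 * s ^ 2)) / (2 * R))) / (2 * ℓ ^ 2)) x := by
    have hct : HasDerivAt (fun t : ℝ => c * t) c x := by
      simpa using (hasDerivAt_id x).const_mul c
    exact (hct.mul hsqrt).div_const (2 * ℓ ^ 2)
  -- third term
  have h3 : HasDerivAt
      (fun t : ℝ => (c / (2 * s)) *
        Real.arctan (Real.sqrt (ℓ ^ 2 - t ^ 2 * s ^ 2) / (t * s)))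
      ((c / (2 * s)) * (1 / (1 + (R / (x * s)) ^ 2) *
          ((((-((2 : ℕ) * x ^ 1 * s ^ 2)) / (2 * R)) * (x * s) - R * s) / (x * s) ^ 2))) x := by
    have hts : HasDerivAt (fun t : ℝ => t * s) s x := by
      simpa using (hasDerivAt_id x).mul_const s
    have hq := hsqrt.div hts hxs.ne'
    exact (hq.arctan).const_mul (c / (2 * s))
  have h := (h1.sub h2).sub h3
  refine h.congr_deriv ?_
  have hsin : Real.sin (Real.arcsin (x * s / ℓ) + γ) = x * s * c / ℓ + R * s / ℓ := by
    have hle : x * s / ℓ ≤ 1 := by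
      rw [div_le_one hℓ]; exact hxl.le
    have hge : -1 ≤ x * s / ℓ := by
      have : (0:ℝ) ≤ x * s / ℓ := by positivity
      linarith
    rw [Real.sin_add, Real.sin_arcsin hge hle, Real.cos_arcsin]
    have : Real.sqrt (1 - (x * s / ℓ) ^ 2) = R / ℓ := by
      rw [hRdef, show (1 : ℝ) - (x * s / ℓ) ^ 2 = (ℓ ^ 2 - x ^ 2 * s ^ 2) / ℓ ^ 2 by
          field_simp, Real.sqrt_div hD.le, Real.sqrt_sq hℓ.le]
    rw [this]; ring
  rw [hsin]
  have h1u : 1 + (R / (x * s)) ^ 2 = ℓ ^ 2 / (x * s) ^ 2 := by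
    field_simp
    nlinarith [hR2]
  rw [h1u]
  field_simp
  push_cast; nlinarith [hR2, sq_nonneg R]
end

section
/- Let γ ∈ (0, π), let ℓ > 0, and let x satisfy 0 < x and x·sin γ < ℓ. Write R(t) = Real.sqrt (ℓ² − t²·(sin γ)²). Then the function P₋(t) = −t²·(sin γ)² / (2ℓ²) − cos γ · t · R(t) / (2ℓ²) − (cos γ / (2·sin γ)) · Real.arctan (R(t) / (t·sin γ)) has derivative (x·sin γ / (ℓ·R(x))) · Real.sin (Real.arcsin (x·sin γ / ℓ) − γ) at the point x. (This gives an explicit antiderivative, on the interval 0 < t·sin γ < ℓ, of the integrand with the minus sign appearing in the multi-chord density of concave polygons.) -/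
theorem antiderivative_minus_integrand
    (γ ℓ x : ℝ) (hγ : γ ∈ Set.Ioo 0 Real.pi) (hℓ : 0 < ℓ)
    (hx : 0 < x) (hxl : x * Real.sin γ < ℓ) :
    HasDerivAt
      (fun t : ℝ =>
        -(t ^ 2 * (Real.sin γ) ^ 2) / (2 * ℓ ^ 2)
          - Real.cos γ * t * Real.sqrt (ℓ ^ 2 - t ^ 2 * (Real.sin γ) ^ 2) / (2 * ℓ ^ 2)
          - (Real.cos γ / (2 * Real.sin γ)) *
              Real.arctan (Real.sqrt (ℓ ^ 2 - t ^ 2 * (Real.sin γ) ^ 2) / (t * Real.sin γ)))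
      ((x * Real.sin γ / (ℓ * Real.sqrt (ℓ ^ 2 - x ^ 2 * (Real.sin γ) ^ 2))) *
        Real.sin (Real.arcsin (x * Real.sin γ / ℓ) - γ)) x := by
  set s := Real.sin γ with hs_def
  have hs : 0 < s := Real.sin_pos_of_pos_of_lt_pi hγ.1 hγ.2
  have hxs : 0 < x * s := mul_pos hx hs
  have hu : 0 < ℓ ^ 2 - x ^ 2 * s ^ 2 := by nlinarith
  set R := Real.sqrt (ℓ ^ 2 - x ^ 2 * s ^ 2) with hR_def
  have hRpos : 0 < R := Real.sqrt_pos.2 hu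
  have hR2 : R ^ 2 = ℓ ^ 2 - x ^ 2 * s ^ 2 := Real.sq_sqrt hu.le
  -- inner function derivative
  have hin : HasDerivAt (fun t : ℝ => ℓ ^ 2 - t ^ 2 * s ^ 2) (-(2 * x * s ^ 2)) x := by
    have := ((hasDerivAt_pow 2 x).mul_const (s ^ 2)).const_sub (ℓ ^ 2)
    convert this using 1
    · rfl
    · rfl
    push_cast
    ring
  have hRd : HasDerivAt (fun t : ℝ => Real.sqrt (ℓ ^ 2 - t ^ 2 * s ^ 2))
      (-(2 * x * s ^ 2) / (2 * R)) x := hin.sqrt (ne_of_gt hu)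
  -- term 1
  have h1 : HasDerivAt (fun t : ℝ => -(t ^ 2 * s ^ 2) / (2 * ℓ ^ 2))
      (-((2 : ℕ) * x ^ 1 * s ^ 2) / (2 * ℓ ^ 2)) x := by
    exact (((hasDerivAt_pow 2 x).mul_const (s ^ 2)).neg).div_const _
  -- term 2
  have h2 : HasDerivAt (fun t : ℝ => Real.cos γ * t * Real.sqrt (ℓ ^ 2 - t ^ 2 * s ^ 2) / (2 * ℓ ^ 2))
      ((Real.cos γ * 1 * R + Real.cos γ * x * (-(2 * x * s ^ 2) / (2 * R))) / (2 * ℓ ^ 2)) x := by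
    exact (((hasDerivAt_id x).const_mul (Real.cos γ)).mul hRd).div_const _
  -- term 3
  have hdenom : HasDerivAt (fun t : ℝ => t * s) (1 * s) x := (hasDerivAt_id x).mul_const s
  have hg : HasDerivAt (fun t : ℝ => Real.sqrt (ℓ ^ 2 - t ^ 2 * s ^ 2) / (t * s))
      ((-(2 * x * s ^ 2) / (2 * R) * (x * s) - R * (1 * s)) / (x * s) ^ 2) x :=
    hRd.div hdenom (ne_of_gt hxs)
  have h3 : HasDerivAt (fun t : ℝ => (Real.cos γ / (2 * s)) *
      Real.arctan (Real.sqrt (ℓ ^ 2 - t ^ 2 * s ^ 2) / (t * s)))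
      ((Real.cos γ / (2 * s)) * (1 / (1 + (R / (x * s)) ^ 2) *
        ((-(2 * x * s ^ 2) / (2 * R) * (x * s) - R * (1 * s)) / (x * s) ^ 2))) x :=
    hg.arctan.const_mul _
  have h := (h1.sub h2).sub h3
  convert h using 1
  · rfl
  · rfl
  · rfl
  -- now the algebraic identity
  have hsin : Real.sin (Real.arcsin (x * s / ℓ)) = x * s / ℓ := by
    apply Real.sin_arcsin
    · have : 0 ≤ x * s / ℓ := by positivity
      linarith
    · rw [div_le_one hℓ]; exact hxl.le
  have hcos : Real.cos (Real.arcsin (x * s / ℓ)) = R / ℓ := by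
    rw [Real.cos_arcsin]
    rw [show 1 - (x * s / ℓ) ^ 2 = (ℓ ^ 2 - x ^ 2 * s ^ 2) / ℓ ^ 2 by field_simp]
    rw [Real.sqrt_div hu.le, Real.sqrt_sq hℓ.le]
  rw [Real.sin_sub, hsin, hcos]
  have hdn : 1 + (R / (x * s)) ^ 2 = ℓ ^ 2 / (x * s) ^ 2 := by
    field_simp
    nlinarith [hR2]
  rw [hdn]
  have hRne : R ≠ 0 := ne_of_gt hRpos
  have hsne : s ≠ 0 := ne_of_gt hs
  have hxne : x ≠ 0 := ne_of_gt hx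
  have hlne : ℓ ≠ 0 := ne_of_gt hℓ
  field_simp
  ring_nf
  rw [← hs_def]
  ring
end

section
/- In ℝ², define the cross product of u, v ∈ ℝ² by u × v = u.1·v.2 − u.2·v.1. Let O, V, D ∈ ℝ², let v, w ∈ ℝ² and x ∈ ℝ, and set P = O + x • v. Assume D − O = ‖D − O‖ • w (so w is the unit vector from O toward D) and (P − V) × w ≠ 0. Define y = ‖D − O‖ − ((P − V) × (D − V)) / ((P − V) × w). Then the three points P, V and O + y • w are collinear, i.e. Collinear ℝ {P, V, O + y • w}. (This is the 'opposite function' op(x) = y assigning to a point on one side of a diagonal pentagon the point on the other side such that the joining line passes through the concave vertex V.) -/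
theorem opposite_function_collinear
    (O V D v w : EuclideanSpace ℝ (Fin 2)) (x : ℝ)
    (cross : EuclideanSpace ℝ (Fin 2) → EuclideanSpace ℝ (Fin 2) → ℝ)
    (hcross : ∀ u u' : EuclideanSpace ℝ (Fin 2), cross u u' = u 0 * u' 1 - u 1 * u' 0)
    (P : EuclideanSpace ℝ (Fin 2)) (hP : P = O + x • v)
    (hw : D - O = ‖D - O‖ • w)
    (hne : cross (P - V) w ≠ 0)
    (y : ℝ) (hy : y = ‖D - O‖ - cross (P - V) (D - V) / cross (P - V) w) :
    Collinear ℝ {P, V, O + y • w} := by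
  set Q : EuclideanSpace ℝ (Fin 2) := O + y • w with hQ
  have hD0 : D 0 - O 0 = ‖D - O‖ * w 0 := by
    have := congrArg (fun z => z 0) hw
    simpa using this
  have hD1 : D 1 - O 1 = ‖D - O‖ * w 1 := by
    have := congrArg (fun z => z 1) hw
    simpa using this
  have hc : cross (P - V) w = (P 0 - V 0) * w 1 - (P 1 - V 1) * w 0 := by
    rw [hcross]; simp
  have hkey : (P 0 - V 0) * (Q 1 - V 1) - (P 1 - V 1) * (Q 0 - V 0) = 0 := by
    have hQ0 : Q 0 = O 0 + y * w 0 := by simp [hQ]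
    have hQ1 : Q 1 = O 1 + y * w 1 := by simp [hQ]
    rw [hQ0, hQ1, hy, hcross, hc]
    rw [hc] at hne
    simp only [PiLp.sub_apply]
    field_simp
    linear_combination (-(((P 0 - V 0) * w 1 - (P 1 - V 1) * w 0)) * (P 0 - V 0)) * hD1 +
      (((P 0 - V 0) * w 1 - (P 1 - V 1) * w 0) * (P 1 - V 1)) * hD0
  have hmem : V ∈ ({P, V, Q} : Set (EuclideanSpace ℝ (Fin 2))) := by simp
  rw [collinear_iff_of_mem hmem]
  refine ⟨P - V, ?_⟩
  intro p hp
  rcases hp with rfl | rfl | rfl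
  · exact ⟨1, by simp⟩
  · exact ⟨0, by simp⟩
  · -- p = Q
    have hu : P 0 - V 0 ≠ 0 ∨ P 1 - V 1 ≠ 0 := by
      by_contra h
      push_neg at h
      rw [hc, h.1, h.2] at hne
      simp at hne
    rcases hu with h0 | h1
    · refine ⟨(Q 0 - V 0) / (P 0 - V 0), ?_⟩
      ext i
      fin_cases i
      · simp only [EuclideanSpace, PiLp, WithLp]
        show Q 0 = (Q 0 - V 0) / (P 0 - V 0) * (P 0 - V 0) + V 0
        field_simp
        ring
      · show Q 1 = (Q 0 - V 0) / (P 0 - V 0) * (P 1 - V 1) + V 1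
        field_simp
        nlinarith [hkey]
    · refine ⟨(Q 1 - V 1) / (P 1 - V 1), ?_⟩
      ext i
      fin_cases i
      · show Q 0 = (Q 1 - V 1) / (P 1 - V 1) * (P 0 - V 0) + V 0
        field_simp
        nlinarith [hkey]
      · show Q 1 = (Q 1 - V 1) / (P 1 - V 1) * (P 1 - V 1) + V 1
        field_simp
        ring
end
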